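/- Fix an integer d ≥ 2 and a norm ‖·‖ on ℝ^d. Then the class of finite subsets of (ℝ^d, ‖·‖) does not have the qualitative dichotomy property: there exists a metric space H such that 1 < sup{c_H(S) : S a finite nonempty subset of (ℝ^d,‖·‖)} < ∞. -/

import Mathlib

open scoped Classical in
/-- The Lipschitz norm `‖f‖_Lip = sup_{x ≠ y} d(f x, f y) / d(x, y)` of a map between
(pseudo)metric spaces. -/
noncomputable def lipNorm {X H : Type*} [PseudoMetricSpace X] [PseudoMetricSpace H]
    (f : X → H) : ℝ :=
  ⨆ p : X × X, if p.1 = p.2 then 0 else dist (f p.1) (f p.2) / dist p.1 p.2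

open scoped Classical in
/-- The Lipschitz norm of the inverse of an injective map `f`, i.e.
`‖f⁻¹‖_Lip = sup_{x ≠ y} d(x, y) / d(f x, f y)`. -/
noncomputable def colipNorm {X H : Type*} [PseudoMetricSpace X] [PseudoMetricSpace H]
    (f : X → H) : ℝ :=
  ⨆ p : X × X, if p.1 = p.2 then 0 else dist p.1 p.2 / dist (f p.1) (f p.2)

/-- The distortion `dist(f) = ‖f‖_Lip * ‖f⁻¹‖_Lip` of an (injective) map between metric spaces. -/
noncomputable def distortion {X H : Type*} [PseudoMetricSpace X] [PseudoMetricSpace H]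
    (f : X → H) : ℝ := lipNorm f * colipNorm f

/-- `sup {c_H S : S ⊆ E finite nonempty} < ∞`, witnessed by the bound `K`: every finite
nonempty subset of `E` embeds into `H` with distortion at most `K`. -/
def embedsAllFiniteSubsetsWith (E : Type*) [NormedAddCommGroup E]
    (H : Type) [MetricSpace H] (K : ℝ) : Prop :=
  ∀ S : Set E, S.Finite → S.Nonempty → ∃ f : S → H, Function.Injective f ∧ distortion f ≤ K

/-- Some finite nonempty subset `S` of `E` has `c_H S ≥ L`: every injective map `S → H` has
distortion at least `L`. -/
def someFiniteSubsetNeeds (E : Type*) [NormedAddCommGroup E]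
    (H : Type) [MetricSpace H] (L : ℝ) : Prop :=
  ∃ S : Set E, S.Finite ∧ S.Nonempty ∧ ∀ f : S → H, Function.Injective f → L ≤ distortion f

/-!
Either the norm of `E` satisfies the parallelogram law or it does not.

If it does, `E` is Euclidean and we take `H = ℓ∞^d`. Fix `d + 1` pairwise non-parallel vectors
`xⱼ` and embed `{±xⱼ}` into `ℓ∞^d` by `f`. Each diameter `f xⱼ - f (-xⱼ)` has its sup norm attained
in some coordinate, so by pigeonhole two of them, `j ≠ k`, share a coordinate. In that single real
coordinate, `|α| + |β| = max |α + β| |α - β|` compares the two diameters with the cross distances,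
giving `‖xⱼ‖ + ‖xₖ‖ ≤ distortion f * max ‖xⱼ + xₖ‖ ‖xⱼ - xₖ‖`, whereas strict convexity makes
`max ‖xⱼ + xₖ‖ ‖xⱼ - xₖ‖` strictly smaller than `‖xⱼ‖ + ‖xₖ‖`.

If it does not, we take `H = ℓ₂^d`: inner product spaces satisfy the short diagonal inequality
`‖a - c‖² + ‖b - d‖² ≤ ‖a - b‖² + ‖b - c‖² + ‖c - d‖² + ‖d - a‖²`, and a failure of the
parallelogram law makes the quadrilateral `0, u, u + v, v` violate it.

In both cases `dim H = d`, so a linear isomorphism `E ≃ H` embeds all subsets with bounded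
distortion.
-/

open Function Set Module Filter Topology NNReal

lemma lipNorm_nonneg {X H : Type*} [PseudoMetricSpace X] [PseudoMetricSpace H] (f : X → H) :
    0 ≤ lipNorm f :=
  Real.iSup_nonneg fun _ => by split <;> positivity

lemma colipNorm_nonneg {X H : Type*} [PseudoMetricSpace X] [PseudoMetricSpace H] (f : X → H) :
    0 ≤ colipNorm f :=
  Real.iSup_nonneg fun _ => by split <;> positivity

lemma distortion_nonneg {X H : Type*} [PseudoMetricSpace X] [PseudoMetricSpace H] (f : X → H) :
    0 ≤ distortion f :=
  mul_nonneg (lipNorm_nonneg f) (colipNorm_nonneg f)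

open scoped Classical in
lemma dist_le_lipNorm_mul {X H : Type*} [MetricSpace X] [PseudoMetricSpace H] [Finite X]
    (f : X → H) (p q : X) : dist (f p) (f q) ≤ lipNorm f * dist p q := by
  rcases eq_or_ne p q with rfl | hpq
  · simp
  have h : (if p = q then 0 else dist (f p) (f q) / dist p q) ≤ lipNorm f :=
    le_ciSup (f := fun x : X × X => if x.1 = x.2 then 0 else dist (f x.1) (f x.2) / dist x.1 x.2)
      (finite_range _).bddAbove (p, q)
  rw [if_neg hpq] at h
  exact (div_le_iff₀ (dist_pos.2 hpq)).1 h

open scoped Classical in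
lemma dist_le_colipNorm_mul {X H : Type*} [PseudoMetricSpace X] [MetricSpace H] [Finite X]
    {f : X → H} (hf : Injective f) (p q : X) : dist p q ≤ colipNorm f * dist (f p) (f q) := by
  rcases eq_or_ne p q with rfl | hpq
  · simp
  have h : (if p = q then 0 else dist p q / dist (f p) (f q)) ≤ colipNorm f :=
    le_ciSup (f := fun x : X × X => if x.1 = x.2 then 0 else dist x.1 x.2 / dist (f x.1) (f x.2))
      (finite_range _).bddAbove (p, q)
  rw [if_neg hpq] at h
  exact (div_le_iff₀ (dist_pos.2 (hf.ne hpq))).1 h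

lemma distortion_le_mul {X H : Type*} [PseudoMetricSpace X] [PseudoMetricSpace H] [Nonempty X]
    {f : X → H} {K K' : ℝ≥0} (hf : LipschitzWith K f) (hf' : AntilipschitzWith K' f) :
    distortion f ≤ K * K' := by
  have hlip : lipNorm f ≤ K := ciSup_le fun _ => by
    split
    · positivity
    · exact div_le_of_le_mul₀ dist_nonneg K.coe_nonneg (hf.dist_le_mul _ _)
  have hcolip : colipNorm f ≤ K' := ciSup_le fun _ => by
    split
    · positivity
    · exact div_le_of_le_mul₀ dist_nonneg K'.coe_nonneg (hf'.le_mul_dist _ _)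
  exact mul_le_mul hlip hcolip (colipNorm_nonneg f) K.coe_nonneg

theorem exists_embedsAllFiniteSubsetsWith {E : Type*} [NormedAddCommGroup E] [NormedSpace ℝ E]
    [FiniteDimensional ℝ E] {F : Type} [NormedAddCommGroup F] [NormedSpace ℝ F]
    [FiniteDimensional ℝ F] (h : finrank ℝ E = finrank ℝ F) :
    ∃ K, embedsAllFiniteSubsetsWith E F K := by
  let e := ContinuousLinearEquiv.ofFinrankEq h
  refine ⟨‖(e : E →L[ℝ] F)‖₊ * ‖(e.symm : F →L[ℝ] E)‖₊, fun S _ hS => ?_⟩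
  have := hS.to_subtype
  refine ⟨e ∘ Subtype.val, e.injective.comp Subtype.val_injective, ?_⟩
  simpa using distortion_le_mul (e.lipschitz.comp (LipschitzWith.subtype_val S))
    (e.antilipschitz.comp (AntilipschitzWith.subtype_coe S))

lemma abs_sub_add_abs_sub_le_max (a a' b b' : ℝ) :
    |a - a'| + |b - b'| ≤ max (|a - b'| + |b - a'|) (|a - b| + |a' - b'|) := by
  rcases le_total 0 (a - a') with h | h <;> rcases le_total 0 (b - b') with h' | h'
  · rw [abs_of_nonneg h, abs_of_nonneg h']
    exact le_max_of_le_left (by linarith [le_abs_self (a - b'), le_abs_self (b - a')])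
  · rw [abs_of_nonneg h, abs_of_nonpos h']
    exact le_max_of_le_right (by linarith [le_abs_self (a - b), neg_abs_le (a' - b')])
  · rw [abs_of_nonpos h, abs_of_nonneg h']
    exact le_max_of_le_right (by linarith [neg_abs_le (a - b), le_abs_self (a' - b')])
  · rw [abs_of_nonpos h, abs_of_nonpos h']
    exact le_max_of_le_left (by linarith [neg_abs_le (a - b'), neg_abs_le (b - a')])

lemma exists_dist_le_dist_apply {ι : Type*} [Fintype ι] [Nonempty ι] (x y : ι → ℝ) :
    ∃ i, dist x y ≤ dist (x i) (y i) := by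
  obtain ⟨i, hi⟩ := Finite.exists_max fun i => dist (x i) (y i)
  exact ⟨i, (dist_pi_le_iff dist_nonneg).2 hi⟩

theorem exists_ne_add_dist_le_distortion_mul {S : Type*} [MetricSpace S] [Finite S]
    {ι κ : Type*} [Fintype ι] [Nonempty ι] [Fintype κ] (hcard : Fintype.card ι < Fintype.card κ)
    {f : S → ι → ℝ} (hf : Injective f) (p q : κ → S) :
    ∃ j k, j ≠ k ∧ dist (p j) (q j) + dist (p k) (q k) ≤
      distortion f * max (dist (p j) (q k) + dist (p k) (q j))
        (dist (p j) (p k) + dist (q j) (q k)) := by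
  choose ℓ hℓ using fun j => exists_dist_le_dist_apply (f (p j)) (f (q j))
  obtain ⟨j, k, hjk, hjk'⟩ := Fintype.exists_ne_map_eq_of_card_lt ℓ hcard
  refine ⟨j, k, hjk, ?_⟩
  set L := lipNorm f
  set C := colipNorm f
  let g : S → ℝ := fun s => f s (ℓ j)
  have hg : ∀ s t, |g s - g t| ≤ L * dist s t := fun s t =>
    (dist_le_pi_dist (f s) (f t) _).trans (dist_le_lipNorm_mul f s t)
  have hgj : dist (p j) (q j) ≤ C * |g (p j) - g (q j)| :=
    (dist_le_colipNorm_mul hf _ _).trans (mul_le_mul_of_nonneg_left (hℓ j) (colipNorm_nonneg f))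
  have hgk : dist (p k) (q k) ≤ C * |g (p k) - g (q k)| := by
    have hk := hℓ k
    rw [← hjk'] at hk
    exact (dist_le_colipNorm_mul hf _ _).trans (mul_le_mul_of_nonneg_left hk (colipNorm_nonneg f))
  calc dist (p j) (q j) + dist (p k) (q k)
      ≤ C * (|g (p j) - g (q j)| + |g (p k) - g (q k)|) := by
        rw [mul_add]; exact add_le_add hgj hgk
    _ ≤ C * max (L * (dist (p j) (q k) + dist (p k) (q j)))
          (L * (dist (p j) (p k) + dist (q j) (q k))) := by
      refine mul_le_mul_of_nonneg_left ?_ (colipNorm_nonneg f)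
      refine (abs_sub_add_abs_sub_le_max _ _ _ _).trans (max_le_max ?_ ?_) <;>
        rw [mul_add] <;> exact add_le_add (hg _ _) (hg _ _)
    _ = distortion f * max (dist (p j) (q k) + dist (p k) (q j))
          (dist (p j) (p k) + dist (q j) (q k)) := by
      rw [← mul_max_of_nonneg _ _ (lipNorm_nonneg f), distortion]; ring

theorem exists_pos_forall_one_add_mul_le {κ : Type*} [Finite κ] {a b : κ → ℝ}
    (h : ∀ i, a i < b i) : ∃ ε, 0 < ε ∧ ∀ i, (1 + ε) * a i ≤ b i := by
  have hε : ∀ i, ∀ᶠ ε in 𝓝[>] (0 : ℝ), (1 + ε) * a i ≤ b i := fun i => by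
    have : Tendsto (fun ε : ℝ => (1 + ε) * a i) (𝓝[>] 0) (𝓝 (a i)) := by
      simpa using (((tendsto_const_nhds (x := (1 : ℝ))).add (tendsto_id (x := 𝓝 0))).mul_const
        (a i)).mono_left nhdsWithin_le_nhds
    exact (this.eventually_lt_const (h i)).mono fun _ => le_of_lt
  obtain ⟨ε, hε, hεpos⟩ := ((eventually_all.2 hε).and self_mem_nhdsWithin).exists
  exact ⟨ε, hεpos, hε⟩

section Independent

variable {E : Type*} [AddCommGroup E] [Module ℝ E] {u w : E}

lemma add_smul_ne_zero (h : LinearIndependent ℝ ![u, w]) (s : ℝ) : u + s • w ≠ 0 := fun h0 =>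
  one_ne_zero (LinearIndependent.pair_iff.1 h 1 s (by simpa using h0)).1

lemma not_sameRay_add_smul (h : LinearIndependent ℝ ![u, w]) {s t : ℝ} (hst : s ≠ t) :
    ¬SameRay ℝ (u + s • w) (u + t • w) := fun hr => by
  obtain ⟨r₁, r₂, hr₁, -, he⟩ := hr.exists_pos (add_smul_ne_zero h s) (add_smul_ne_zero h t)
  obtain ⟨h₁, h₂⟩ := LinearIndependent.pair_iff.1 h (r₁ - r₂) (r₁ * s - r₂ * t)
    (by linear_combination (norm := module) he)
  exact hst (mul_left_cancel₀ hr₁.ne' (by linear_combination h₂ - t * h₁))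

lemma not_sameRay_add_smul_neg (h : LinearIndependent ℝ ![u, w]) (s t : ℝ) :
    ¬SameRay ℝ (u + s • w) (-(u + t • w)) := fun hr => by
  obtain ⟨r₁, r₂, hr₁, hr₂, he⟩ :=
    hr.exists_pos (add_smul_ne_zero h s) (neg_ne_zero.2 (add_smul_ne_zero h t))
  obtain ⟨h₁, -⟩ := LinearIndependent.pair_iff.1 h (r₁ + r₂) (r₁ * s + r₂ * t)
    (by linear_combination (norm := module) he)
  linarith

end Independent

theorem exists_pairwise_not_sameRay {E : Type*} [AddCommGroup E] [Module ℝ E]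
    (hE : 2 ≤ finrank ℝ E) (m : ℕ) :
    ∃ x : Fin m → E, ∀ j k, j ≠ k → ¬SameRay ℝ (x j) (x k) ∧ ¬SameRay ℝ (x j) (-x k) := by
  have : Nontrivial E := Module.nontrivial_of_finrank_pos (R := ℝ) (by omega)
  obtain ⟨u, hu⟩ := exists_ne (0 : E)
  obtain ⟨w, huw⟩ := exists_linearIndependent_pair_of_one_lt_finrank (R := ℝ) (by omega) hu
  exact ⟨fun j => u + ((j : ℕ) : ℝ) • w, fun j k hjk =>
    ⟨not_sameRay_add_smul huw (Nat.cast_injective.ne (Fin.val_injective.ne hjk)),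
      not_sameRay_add_smul_neg huw _ _⟩⟩

theorem exists_someFiniteSubsetNeeds_one_add_pi {E : Type*} [NormedAddCommGroup E] [NormedSpace ℝ E]
    [StrictConvexSpace ℝ E] {ι : Type} {κ : Type*} [Fintype ι] [Nonempty ι] [Fintype κ]
    (hcard : Fintype.card ι < Fintype.card κ) {x : κ → E}
    (hx : ∀ j k, j ≠ k → ¬SameRay ℝ (x j) (x k) ∧ ¬SameRay ℝ (x j) (-x k)) :
    ∃ ε, 0 < ε ∧ someFiniteSubsetNeeds E (ι → ℝ) (1 + ε) := by
  obtain ⟨ε, hε, hεx⟩ := exists_pos_forall_one_add_mul_le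
    (a := fun jk : {jk : κ × κ // jk.1 ≠ jk.2} => max ‖x jk.1.1 + x jk.1.2‖ ‖x jk.1.1 - x jk.1.2‖)
    (b := fun jk => ‖x jk.1.1‖ + ‖x jk.1.2‖) fun ⟨(j, k), hjk⟩ =>
      max_lt (norm_add_lt_of_not_sameRay (hx j k hjk).1)
        (by simpa [sub_eq_add_neg] using norm_add_lt_of_not_sameRay (hx j k hjk).2)
  have : Nonempty κ := Fintype.card_pos_iff.1 (Nat.zero_lt_of_lt hcard)
  let S : Set E := range x ∪ range (-x)
  have hS : S.Finite := (finite_range x).union (finite_range _)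
  have := hS.to_subtype
  refine ⟨ε, hε, S, hS, (range_nonempty x).mono subset_union_left, fun f hf => ?_⟩
  obtain ⟨j, k, hjk, h⟩ := exists_ne_add_dist_le_distortion_mul hcard hf
    (fun j => ⟨x j, Or.inl ⟨j, rfl⟩⟩) (fun j => ⟨-x j, Or.inr ⟨j, rfl⟩⟩)
  have two_norm (y : E) : ‖y + y‖ = 2 * ‖y‖ := by rw [← two_smul ℝ, norm_smul, Real.norm_two]
  simp only [Subtype.dist_eq, dist_eq_norm, sub_neg_eq_add, two_norm, add_comm (x k),
    neg_add_eq_sub, norm_sub_rev (x k), ← two_mul,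
    ← mul_max_of_nonneg _ _ (zero_le_two : (0 : ℝ) ≤ 2)] at h
  have hM : 0 < max ‖x j + x k‖ ‖x j - x k‖ := lt_max_of_lt_right <|
    norm_pos_iff.2 <| sub_ne_zero.2 fun he => (hx j k hjk).1 (he ▸ SameRay.refl _)
  refine le_of_mul_le_mul_right ?_ hM
  linarith [hεx ⟨(j, k), hjk⟩]

theorem exists_parallelogram_lt {E : Type*} [NormedAddCommGroup E] [NormedSpace ℝ E]
    (h : ¬∀ x y : E, ‖x + y‖ * ‖x + y‖ + ‖x - y‖ * ‖x - y‖ = 2 * (‖x‖ * ‖x‖ + ‖y‖ * ‖y‖)) :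
    ∃ u v : E, 2 * (‖u‖ ^ 2 + ‖v‖ ^ 2) < ‖u + v‖ ^ 2 + ‖u - v‖ ^ 2 := by
  simp only [not_forall] at h
  obtain ⟨u, v, huv⟩ := h
  rcases Ne.lt_or_gt huv with hlt | hgt
  · -- `(u + v) ± (u - v) = 2u, 2v` turns the reverse inequality into this one.
    refine ⟨u + v, u - v, ?_⟩
    have h₁ : ‖u + v + (u - v)‖ = 2 * ‖u‖ := by
      rw [show u + v + (u - v) = (2 : ℝ) • u by module, norm_smul, Real.norm_two]
    have h₂ : ‖u + v - (u - v)‖ = 2 * ‖v‖ := by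
      rw [show u + v - (u - v) = (2 : ℝ) • v by module, norm_smul, Real.norm_two]
    rw [h₁, h₂]
    nlinarith
  · exact ⟨u, v, by nlinarith⟩

theorem norm_sub_sq_add_norm_sub_sq_le {F : Type*} [NormedAddCommGroup F] [InnerProductSpace ℝ F]
    (a b c d : F) :
    ‖a - c‖ ^ 2 + ‖b - d‖ ^ 2 ≤ ‖a - b‖ ^ 2 + ‖b - c‖ ^ 2 + ‖c - d‖ ^ 2 + ‖d - a‖ ^ 2 := by
  have key : ‖a - b‖ ^ 2 + ‖b - c‖ ^ 2 + ‖c - d‖ ^ 2 + ‖d - a‖ ^ 2 =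
      ‖a - c‖ ^ 2 + ‖b - d‖ ^ 2 + ‖a - b + c - d‖ ^ 2 := by
    simp only [← real_inner_self_eq_norm_sq, inner_sub_left, inner_sub_right, inner_add_left,
      inner_add_right]
    linarith [real_inner_comm a b, real_inner_comm a c, real_inner_comm a d,
      real_inner_comm b c, real_inner_comm b d, real_inner_comm c d]
  rw [key]
  exact le_add_of_nonneg_right (sq_nonneg _)

theorem dist_sq_add_dist_sq_le_distortion_sq_mul {S : Type*} [MetricSpace S] [Finite S]
    {F : Type*} [NormedAddCommGroup F] [InnerProductSpace ℝ F] {f : S → F} (hf : Injective f)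
    (a b c d : S) :
    dist a c ^ 2 + dist b d ^ 2 ≤
      distortion f ^ 2 * (dist a b ^ 2 + dist b c ^ 2 + dist c d ^ 2 + dist d a ^ 2) := by
  set L := lipNorm f
  set C := colipNorm f
  calc dist a c ^ 2 + dist b d ^ 2
      ≤ (C * dist (f a) (f c)) ^ 2 + (C * dist (f b) (f d)) ^ 2 := by
        gcongr <;> exact dist_le_colipNorm_mul hf _ _
    _ = C ^ 2 * (dist (f a) (f c) ^ 2 + dist (f b) (f d) ^ 2) := by ring
    _ ≤ C ^ 2 * (dist (f a) (f b) ^ 2 + dist (f b) (f c) ^ 2 + dist (f c) (f d) ^ 2 +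
          dist (f d) (f a) ^ 2) := by
        refine mul_le_mul_of_nonneg_left ?_ (sq_nonneg C)
        simpa only [dist_eq_norm] using norm_sub_sq_add_norm_sub_sq_le (f a) (f b) (f c) (f d)
    _ ≤ C ^ 2 * ((L * dist a b) ^ 2 + (L * dist b c) ^ 2 + (L * dist c d) ^ 2 +
          (L * dist d a) ^ 2) := by
        gcongr <;> exact dist_le_lipNorm_mul f _ _
    _ = distortion f ^ 2 * (dist a b ^ 2 + dist b c ^ 2 + dist c d ^ 2 + dist d a ^ 2) := by
        rw [distortion]; ring

theorem exists_someFiniteSubsetNeeds_one_add_of_parallelogram_lt {E : Type*} [NormedAddCommGroup E]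
    {F : Type} [NormedAddCommGroup F] [InnerProductSpace ℝ F] {u v : E}
    (huv : 2 * (‖u‖ ^ 2 + ‖v‖ ^ 2) < ‖u + v‖ ^ 2 + ‖u - v‖ ^ 2) :
    ∃ ε, 0 < ε ∧ someFiniteSubsetNeeds E F (1 + ε) := by
  set P := 2 * (‖u‖ ^ 2 + ‖v‖ ^ 2)
  set Q := ‖u + v‖ ^ 2 + ‖u - v‖ ^ 2
  have hP : 0 < P := by
    rcases eq_or_ne u 0 with rfl | _
    · rcases eq_or_ne v 0 with rfl | _
      · simp [P, Q] at huv
      · positivity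
    · positivity
  refine ⟨√(Q / P) - 1, sub_pos.2 (Real.lt_sqrt_of_sq_lt (by rwa [one_pow, one_lt_div hP])),
    {0, u, u + v, v}, by simp, by simp, fun f hf => ?_⟩
  have h := dist_sq_add_dist_sq_le_distortion_sq_mul hf ⟨0, by simp⟩ ⟨u, by simp⟩
    ⟨u + v, by simp⟩ ⟨v, by simp⟩
  simp only [Subtype.dist_eq, dist_eq_norm, zero_sub, norm_neg, sub_add_cancel_left,
    add_sub_cancel_right, sub_zero] at h
  rw [add_sub_cancel, Real.sqrt_le_left (distortion_nonneg f), div_le_iff₀ hP]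
  linarith

/-- For a real normed space `E` of (finite) dimension `d ≥ 2`, the class of
finite subsets of `E` does not have the qualitative dichotomy property: there is a metric
space `H` such that `1 < sup {c_H S : S ⊆ E finite nonempty} < ∞` — the supremum is finite
(all finite subsets embed with some uniformly bounded distortion `K`), yet it exceeds `1`
(some finite subset requires distortion at least `1 + ε` with `ε > 0`). -/
theorem finite_dim_no_dichotomy (E : Type*) [NormedAddCommGroup E] [NormedSpace ℝ E]
    [FiniteDimensional ℝ E] (hd : 2 ≤ Module.finrank ℝ E) :
    ∃ (H : Type) (iH : MetricSpace H),
      (∃ ε : ℝ, 0 < ε ∧ @someFiniteSubsetNeeds E _ H iH (1 + ε)) ∧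
      (∃ K : ℝ, @embedsAllFiniteSubsetsWith E _ H iH K) := by
  by_cases hP : ∀ x y : E, ‖x + y‖ * ‖x + y‖ + ‖x - y‖ * ‖x - y‖ = 2 * (‖x‖ * ‖x‖ + ‖y‖ * ‖y‖)
  · have : StrictConvexSpace ℝ E := by
      let _ := InnerProductSpace.ofNorm ℝ hP
      infer_instance
    have : Nonempty (Fin (finrank ℝ E)) := ⟨⟨0, by omega⟩⟩
    obtain ⟨x, hx⟩ := exists_pairwise_not_sameRay hd (finrank ℝ E + 1)
    exact ⟨Fin (finrank ℝ E) → ℝ, inferInstance,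
      exists_someFiniteSubsetNeeds_one_add_pi (by simp) hx,
      exists_embedsAllFiniteSubsetsWith (by simp)⟩
  · obtain ⟨u, v, huv⟩ := exists_parallelogram_lt hP
    exact ⟨EuclideanSpace ℝ (Fin (finrank ℝ E)), inferInstance,
      exists_someFiniteSubsetNeeds_one_add_of_parallelogram_lt huv,
      exists_embedsAllFiniteSubsetsWith (by simp)⟩
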